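/- Let M ∈ ℝ^{d×d} be a monotone matrix and q ∈ ℝ^d, and let F(z, τ) = (Mz + qτ, −zᵀMz/τ − zᵀq) for τ > 0. Suppose p = (p_z, 0) ∈ ℝ^d × ℝ and r = (r_z, r_τ) ∈ ℝ^d × ℝ satisfy the monotone-extension condition (F(u) − r)ᵀ(u − p) ≥ 0 for all u = (z, τ) with τ > 0. Then p_zᵀM p_z = 0, M p_z = r_z, and r_τ ≤ −p_zᵀq; that is, (p, r) is an element of the infeasibility-embedding operator I. -/

import Mathlib

/-!
Expanding the monotone-extension inequality, the quadratic terms `zᵀMz` cancel and what remains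
is the affine inequality `z ⬝ (Mᵀ p_z + r_z) + τ (q ⬝ p_z + r_τ) ≤ r_z ⬝ p_z` for all `z` and all
`τ > 0`. An affine function bounded above on `ℝᵈ × (0, ∞)` has zero `z`-coefficient, nonpositive
`τ`-coefficient and nonnegative constant term; so `Mᵀ p_z = -r_z`, `r_τ ≤ -p_z ⬝ q` and
`p_zᵀ M p_z = -r_z ⬝ p_z ≤ 0`. Monotonicity of `M` forces `p_zᵀ M p_z = 0`, hence
`(M + Mᵀ) p_z = 0`, i.e. `M p_z = -Mᵀ p_z = r_z`.
-/

open Matrix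

section OrderedField

variable {𝕜 : Type*} [Field 𝕜] [LinearOrder 𝕜] [IsStrictOrderedRing 𝕜]

theorem Matrix.eq_zero_of_forall_dotProduct_le {n : Type*} [Fintype n] {a : n → 𝕜} {c : 𝕜}
    (h : ∀ z, z ⬝ᵥ a ≤ c) : a = 0 := by
  by_contra ha
  have := h (((c + 1) / (a ⬝ᵥ a)) • a)
  rw [smul_dotProduct, smul_eq_mul, div_mul_cancel₀ _ (dotProduct_self_eq_zero.not.mpr ha)] at this
  linarith

theorem nonpos_and_nonneg_of_forall_pos_mul_le {b c : 𝕜} (h : ∀ τ : 𝕜, 0 < τ → τ * b ≤ c) :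
    b ≤ 0 ∧ 0 ≤ c := by
  have hbc : b ≤ c := by simpa using h 1 one_pos
  have hb : b ≤ 0 := by
    by_contra! hb
    have := h ((max c 0 + 1) / b) (by positivity)
    rw [div_mul_cancel₀ _ hb.ne'] at this
    linarith [le_max_left c 0]
  refine ⟨hb, ?_⟩
  by_contra! hc
  have hb' : b < 0 := hbc.trans_lt hc
  have := h (c / (2 * b)) (div_pos_of_neg_of_neg hc (by linarith))
  rw [div_mul_eq_mul_div, mul_div_mul_right c 2 hb'.ne] at this
  linarith

end OrderedField

theorem Matrix.dotProduct_add_transpose_mulVec_self {R n : Type*} [CommRing R] [Fintype n]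
    (M : Matrix n n R) (x : n → R) : x ⬝ᵥ ((M + Mᵀ) *ᵥ x) = 2 * (x ⬝ᵥ (M *ᵥ x)) := by
  rw [add_mulVec, dotProduct_add, dotProduct_transpose_mulVec]
  ring

section Monotone

variable {n : Type*} [Fintype n] {M : Matrix n n ℝ}

theorem Matrix.dotProduct_mulVec_self_nonneg_of_posSemidef_add_transpose
    (hM : (M + Mᵀ).PosSemidef) (x : n → ℝ) : 0 ≤ x ⬝ᵥ (M *ᵥ x) := by
  have := hM.dotProduct_mulVec_nonneg x
  rw [star_trivial, dotProduct_add_transpose_mulVec_self] at this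
  linarith

theorem Matrix.mulVec_eq_neg_transpose_mulVec_of_posSemidef_add_transpose
    (hM : (M + Mᵀ).PosSemidef) {x : n → ℝ} (hx : x ⬝ᵥ (M *ᵥ x) = 0) :
    M *ᵥ x = -(Mᵀ *ᵥ x) := by
  have hker : (M + Mᵀ) *ᵥ x = 0 := by
    rw [← hM.dotProduct_mulVec_zero_iff, star_trivial, dotProduct_add_transpose_mulVec_self, hx,
      mul_zero]
  rw [add_mulVec] at hker
  exact eq_neg_of_add_eq_zero_left hker

end Monotone

theorem feasibility_extension_pairing_eq {𝕜 n : Type*} [Field 𝕜] [Fintype n]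
    (M : Matrix n n 𝕜) (q pz rz z : n → 𝕜) (rτ : 𝕜) {τ : 𝕜} (hτ : τ ≠ 0) :
    ((M *ᵥ z + τ • q) - rz) ⬝ᵥ (z - pz) + ((-(z ⬝ᵥ (M *ᵥ z)) / τ - z ⬝ᵥ q) - rτ) * (τ - 0) =
      rz ⬝ᵥ pz - z ⬝ᵥ (Mᵀ *ᵥ pz + rz) - τ * (q ⬝ᵥ pz + rτ) := by
  simp only [sub_dotProduct, add_dotProduct, dotProduct_sub, dotProduct_add, smul_dotProduct,
    smul_eq_mul, dotProduct_transpose_mulVec, dotProduct_comm z q, dotProduct_comm z rz,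
    dotProduct_comm (M *ᵥ z)]
  field_simp
  ring

/-- Any monotone-extension pair `(p, r)` of the feasibility-embedding operator
`F` with `p = (p_z, 0)` must belong to the infeasibility-embedding operator `I`:
`p_zᵀ M p_z = 0`, `M p_z = r_z` and `r_τ ≤ -p_zᵀ q`. -/
theorem extension_pairs_lie_in_infeasibility_operator
    {d : ℕ} (M : Matrix (Fin d) (Fin d) ℝ) (q : Fin d → ℝ)
    (hM : (M + Mᵀ).PosSemidef)
    (pz rz : Fin d → ℝ) (rτ : ℝ)
    (hext : ∀ (z : Fin d → ℝ) (τ : ℝ), 0 < τ →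
      ((M *ᵥ z + τ • q) - rz) ⬝ᵥ (z - pz) +
        ((-(z ⬝ᵥ (M *ᵥ z)) / τ - z ⬝ᵥ q) - rτ) * (τ - 0) ≥ 0) :
    pz ⬝ᵥ (M *ᵥ pz) = 0 ∧ M *ᵥ pz = rz ∧ rτ ≤ -(pz ⬝ᵥ q) := by
  have haffine : ∀ z τ, 0 < τ → z ⬝ᵥ (Mᵀ *ᵥ pz + rz) + τ * (q ⬝ᵥ pz + rτ) ≤ rz ⬝ᵥ pz := by
    intro z τ hτ
    have := hext z τ hτ
    rw [feasibility_extension_pairing_eq M q pz rz z rτ hτ.ne'] at this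
    linarith
  have hMT : Mᵀ *ᵥ pz = -rz := eq_neg_of_add_eq_zero_left <|
    eq_zero_of_forall_dotProduct_le (c := rz ⬝ᵥ pz - (q ⬝ᵥ pz + rτ)) fun z => by
      linarith [haffine z 1 one_pos]
  obtain ⟨hτcoeff, hconst⟩ := nonpos_and_nonneg_of_forall_pos_mul_le fun τ hτ => by
    simpa using haffine 0 τ hτ
  have hquad : pz ⬝ᵥ (M *ᵥ pz) = 0 := by
    refine le_antisymm ?_ (dotProduct_mulVec_self_nonneg_of_posSemidef_add_transpose hM pz)
    rw [← dotProduct_transpose_mulVec, hMT, dotProduct_neg, dotProduct_comm]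
    linarith
  refine ⟨hquad, ?_, by rw [dotProduct_comm]; linarith⟩
  rw [mulVec_eq_neg_transpose_mulVec_of_posSemidef_add_transpose hM hquad, hMT, neg_neg]
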